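/- Let f : ℕ → ℕ have a Diophantine graph. Then for every sufficiently large n there exists a system S ⊆ E_n (equations of forms x_i = 1, x_i + x_j = x_k, x_i · x_j = x_k with indices in {1,...,n}) such that S has a solution in non-negative integers, and every solution (x_1,...,x_n) in non-negative integers satisfies x_1 = f(n). -/

import Mathlib

/-- An equation from the set `E_n`: `x_i = 1`, `x_i + x_j = x_k`, or `x_i * x_j = x_k`
with indices in `{1, ..., n}` (here `Fin n`). -/
inductive Eqn (n : ℕ) where
  | one (i : Fin n)
  | add (i j k : Fin n)
  | mul (i j k : Fin n)

/-- The equation holds for an assignment `x` of values in a commutative semiring. -/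
def Eqn.Holds {n : ℕ} {K : Type*} [CommSemiring K] (x : Fin n → K) : Eqn n → Prop
  | .one i => x i = 1
  | .add i j k => x i + x j = x k
  | .mul i j k => x i * x j = x k

/-!
Write `W = P - Q` with `P`, `Q` having natural coefficients. Such a polynomial is evaluated by a
straight-line program of additions and multiplications, each step writing a fresh unknown, and
each step is an equation of `E_n`; the constant `n` is built by binary expansion in `O(log n)`
steps. Running the programs for `P`, `Q` and `n` on the unknowns `x_1, …, x_r` and asserting
`P = Q` and `x_2 = n` gives a system whose solutions restrict exactly to the solutions of
`W = 0` with `x_2 = n`, and these all have `x_1 = f n`. The programs for `P` and `Q` have fixed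
length, so for large `n` the system fits into `n` unknowns.
-/

namespace MvPolynomial

variable {σ : Type*}

theorem exists_eq_map_sub_map (W : MvPolynomial σ ℤ) :
    ∃ P Q : MvPolynomial σ ℕ, W = P.map (Nat.castRingHom ℤ) - Q.map (Nat.castRingHom ℤ) := by
  induction W using MvPolynomial.induction_on with
  | C a => exact ⟨C a.toNat, C (-a).toNat, by rw [map_C, map_C, ← C_sub]; simp⟩
  | add W₁ W₂ hW₁ hW₂ =>
    obtain ⟨P₁, Q₁, rfl⟩ := hW₁
    obtain ⟨P₂, Q₂, rfl⟩ := hW₂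
    exact ⟨P₁ + P₂, Q₁ + Q₂, by simp only [map_add]; ring⟩
  | mul_X W i hW =>
    obtain ⟨P, Q, rfl⟩ := hW
    exact ⟨P * X i, Q * X i, by simp only [map_mul, map_X]; ring⟩

theorem aeval_map_natCast (P : MvPolynomial σ ℕ) (x : σ → ℕ) :
    aeval (fun i => (x i : ℤ)) (P.map (Nat.castRingHom ℤ)) = (eval x P : ℤ) := by
  rw [← Nat.coe_castRingHom, eval₂_comp, aeval_def, eval₂_map]
  congr 1

end MvPolynomial

namespace SLP

inductive Op
  | zero
  | one
  | add (i j : ℕ)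
  | mul (i j : ℕ)

namespace Op

def eval (v : ℕ → ℕ) : Op → ℕ
  | zero => 0
  | one => 1
  | add i j => v i + v j
  | mul i j => v i * v j

def ReadsBelow (c : ℕ) : Op → Prop
  | zero | one => True
  | add i j | mul i j => i < c ∧ j < c

theorem eval_congr {op : Op} {c : ℕ} {v w : ℕ → ℕ} (hop : op.ReadsBelow c)
    (hvw : ∀ j < c, v j = w j) : op.eval v = op.eval w := by
  cases op with
  | zero | one => rfl
  | add i j | mul i j => simp only [eval, hvw i hop.1, hvw j hop.2]

end Op

/-- The `k`-th operation of a program loaded at register `c` writes register `c + k`. -/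
def Runs (v : ℕ → ℕ) : ℕ → List Op → Prop
  | _, [] => True
  | c, op :: p => v c = op.eval v ∧ Runs v (c + 1) p

def WellFormed : ℕ → List Op → Prop
  | _, [] => True
  | c, op :: p => op.ReadsBelow c ∧ WellFormed (c + 1) p

theorem runs_append {v : ℕ → ℕ} {c : ℕ} {p q : List Op} :
    Runs v c (p ++ q) ↔ Runs v c p ∧ Runs v (c + p.length) q := by
  induction p generalizing c with
  | nil => simp [Runs]
  | cons op p ih => simp [Runs, ih, and_assoc, Nat.add_right_comm, Nat.add_assoc]

theorem wellFormed_append {c : ℕ} {p q : List Op} :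
    WellFormed c (p ++ q) ↔ WellFormed c p ∧ WellFormed (c + p.length) q := by
  induction p generalizing c with
  | nil => simp [WellFormed]
  | cons op p ih => simp [WellFormed, ih, and_assoc, Nat.add_right_comm, Nat.add_assoc]

theorem WellFormed.runs_congr {c : ℕ} {p : List Op} (hp : WellFormed c p) {v w : ℕ → ℕ}
    (hvw : ∀ j < c + p.length, v j = w j) (h : Runs v c p) : Runs w c p := by
  induction p generalizing c with
  | nil => trivial
  | cons op p ih =>
    simp only [List.length_cons] at hvw
    refine ⟨?_, ih hp.2 (fun j hj => hvw j (by omega)) h.2⟩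
    rw [← hvw c (by omega), h.1, Op.eval_congr hp.1 fun j hj => hvw j (by omega)]

theorem WellFormed.exists_runs {c : ℕ} {p : List Op} (hp : WellFormed c p) (v : ℕ → ℕ) :
    ∃ w : ℕ → ℕ, (∀ j < c, w j = v j) ∧ Runs w c p := by
  induction p generalizing c v with
  | nil => exact ⟨v, fun _ _ => rfl, trivial⟩
  | cons op p ih =>
    obtain ⟨w, hw, hrun⟩ := ih hp.2 (Function.update v c (op.eval v))
    have hwv : ∀ j < c, w j = v j := fun j hj => by
      rw [hw j (by omega), Function.update_of_ne hj.ne]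
    refine ⟨w, hwv, ?_, hrun⟩
    rw [hw c (by omega), Function.update_self, Op.eval_congr hp.1 fun j hj => (hwv j hj).symm]

def Computes (c : ℕ) (p : List Op) (g : (ℕ → ℕ) → ℕ) : Prop :=
  WellFormed c p ∧ p ≠ [] ∧ ∀ v, Runs v c p → v (c + p.length - 1) = g v

theorem Computes.length_pos {c : ℕ} {p : List Op} {g : (ℕ → ℕ) → ℕ} (h : Computes c p g) :
    0 < p.length :=
  List.length_pos_iff.mpr h.2.1

theorem computes_append_singleton {c : ℕ} {p : List Op} {op : Op} {g : (ℕ → ℕ) → ℕ}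
    (hp : WellFormed c p) (hop : op.ReadsBelow (c + p.length))
    (hg : ∀ v, Runs v c p → op.eval v = g v) : Computes c (p ++ [op]) g := by
  refine ⟨wellFormed_append.mpr ⟨hp, hop, trivial⟩, by simp, fun v hv => ?_⟩
  obtain ⟨hvp, hvop, -⟩ := runs_append.mp hv
  simpa [hvop] using hg v hvp

theorem Computes.zero (c : ℕ) : Computes c [.zero] fun _ => 0 :=
  computes_append_singleton (p := []) trivial trivial fun _ _ => rfl

theorem Computes.one (c : ℕ) : Computes c [.one] fun _ => 1 :=
  computes_append_singleton (p := []) trivial trivial fun _ _ => rfl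

theorem Computes.var {c i : ℕ} (hi : i < c) : Computes c [.zero, .add i c] fun v => v i :=
  computes_append_singleton (p := [.zero]) ⟨trivial, trivial⟩ ⟨by simp; omega, by simp⟩
    fun v hv => by simp [Op.eval, hv.1]

theorem Computes.append {c : ℕ} {p q : List Op} {g h : (ℕ → ℕ) → ℕ}
    (hp : Computes c p g) (hq : Computes (c + p.length) q h) :
    WellFormed c (p ++ q) ∧ ∀ v, Runs v c (p ++ q) →
      v (c + p.length - 1) = g v ∧ v (c + p.length + q.length - 1) = h v :=
  ⟨wellFormed_append.mpr ⟨hp.1, hq.1⟩, fun v hv =>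
    ⟨hp.2.2 v (runs_append.mp hv).1, hq.2.2 v (runs_append.mp hv).2⟩⟩

theorem Computes.add {c : ℕ} {p q : List Op} {g h : (ℕ → ℕ) → ℕ}
    (hp : Computes c p g) (hq : Computes (c + p.length) q h) :
    Computes c (p ++ q ++ [.add (c + p.length - 1) (c + p.length + q.length - 1)])
      fun v => g v + h v := by
  obtain ⟨hwf, hval⟩ := hp.append hq
  have := hp.length_pos
  have := hq.length_pos
  refine computes_append_singleton hwf ⟨by simp; omega, by simp; omega⟩ fun v hv => ?_
  simp [Op.eval, hval v hv]

theorem Computes.mul {c : ℕ} {p q : List Op} {g h : (ℕ → ℕ) → ℕ}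
    (hp : Computes c p g) (hq : Computes (c + p.length) q h) :
    Computes c (p ++ q ++ [.mul (c + p.length - 1) (c + p.length + q.length - 1)])
      fun v => g v * h v := by
  obtain ⟨hwf, hval⟩ := hp.append hq
  have := hp.length_pos
  have := hq.length_pos
  refine computes_append_singleton hwf ⟨by simp; omega, by simp; omega⟩ fun v hv => ?_
  simp [Op.eval, hval v hv]

theorem Computes.double {c : ℕ} {p : List Op} {g : (ℕ → ℕ) → ℕ} (hp : Computes c p g) :
    Computes c (p ++ [.add (c + p.length - 1) (c + p.length - 1)]) fun v => g v + g v := by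
  have := hp.length_pos
  refine computes_append_singleton hp.1 ⟨by omega, by omega⟩ fun v hv => ?_
  simp [Op.eval, hp.2.2 v hv]

/-- Binary expansion: at most three operations per bit. -/
theorem exists_computes_const_of_lt_two_pow (c k m : ℕ) (hm : m < 2 ^ k) :
    ∃ p, Computes c p (fun _ => m) ∧ p.length ≤ 3 * k + 1 := by
  induction k generalizing m with
  | zero =>
    obtain rfl : m = 0 := by simpa using hm
    exact ⟨_, Computes.zero c, le_rfl⟩
  | succ k ih =>
    obtain ⟨p, hp, hlen⟩ := ih (m / 2) (by rw [pow_succ] at hm; omega)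
    have hdouble := hp.double
    rcases Nat.mod_two_eq_zero_or_one m with hm2 | hm2
    · rw [show m = m / 2 + m / 2 by omega]
      exact ⟨_, hdouble, by simp; omega⟩
    · rw [show m = m / 2 + m / 2 + 1 by omega]
      exact ⟨_, hdouble.add (Computes.one _), by simp; omega⟩

theorem exists_computes_const (c m : ℕ) :
    ∃ p, Computes c p (fun _ => m) ∧ p.length ≤ 3 * (m / 4) + 10 := by
  have hm : m < 2 ^ (m / 4 + 3) := by
    have : m / 4 < 2 ^ (m / 4) := Nat.lt_two_pow_self
    rw [pow_add]
    omega
  obtain ⟨p, hp, hlen⟩ := exists_computes_const_of_lt_two_pow c _ m hm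
  exact ⟨p, hp, by omega⟩

open MvPolynomial in
theorem exists_computes_eval {r : ℕ} (P : MvPolynomial (Fin r) ℕ) {c : ℕ} (hc : r ≤ c) :
    ∃ p, Computes c p fun v => eval (fun i : Fin r => v i) P := by
  induction P using MvPolynomial.induction_on generalizing c with
  | C a =>
    obtain ⟨p, hp, -⟩ := exists_computes_const c a
    exact ⟨p, by simpa using hp⟩
  | add P Q hP hQ =>
    obtain ⟨p, hp⟩ := hP hc
    obtain ⟨q, hq⟩ := hQ (c := c + p.length) (by omega)
    exact ⟨_, by simpa using hp.add hq⟩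
  | mul_X P i hP =>
    obtain ⟨p, hp⟩ := hP hc
    exact ⟨_, by simpa using hp.mul (Computes.var (i := i) (by omega))⟩

section Equations

open Fin.NatCast

variable {n : ℕ} [NeZero n]

/-- Registers are read modulo `n`; `x_d + x_d = x_d` encodes `x_d = 0`. -/
def Op.toEqn (d : ℕ) : Op → Eqn n
  | .zero => .add d d d
  | .one => .one d
  | .add i j => .add i j d
  | .mul i j => .mul i j d

theorem Op.holds_toEqn_iff {x : Fin n → ℕ} {d : ℕ} {op : Op} :
    (op.toEqn d).Holds x ↔ x d = op.eval fun j => x j := by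
  cases op <;> simp only [toEqn, eval, Eqn.Holds] <;> omega

def toEqns : ℕ → List Op → List (Eqn n)
  | _, [] => []
  | c, op :: p => op.toEqn c :: toEqns (c + 1) p

theorem forall_holds_toEqns_iff {x : Fin n → ℕ} {c : ℕ} {p : List Op} :
    (∀ e ∈ toEqns c p, e.Holds x) ↔ Runs (fun j => x j) c p := by
  induction p generalizing c with
  | nil => simp [toEqns, Runs]
  | cons op p ih => simp [toEqns, Runs, Op.holds_toEqn_iff, ih]

theorem WellFormed.exists_fin_runs {c : ℕ} {p : List Op} (hp : WellFormed c p)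
    (hn : c + p.length ≤ n) (y : Fin c → ℕ) :
    ∃ x : Fin n → ℕ, Runs (fun j => x j) c p ∧ ∀ i : Fin c, x (i : ℕ) = y i := by
  obtain ⟨v, hvy, hrun⟩ := hp.exists_runs fun j => if h : j < c then y ⟨j, h⟩ else 0
  have hcast : ∀ j < n, v ((j : Fin n) : ℕ) = v j := fun j hj => by rw [Fin.val_cast_of_lt hj]
  refine ⟨fun i => v i, hp.runs_congr (fun j hj => (hcast j (by omega)).symm) hrun, fun i => ?_⟩
  change v ((i : Fin n) : ℕ) = y i
  rw [hcast _ (by omega), hvy _ i.isLt, dif_pos i.isLt]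

theorem exists_eqns_iff_of_computes {r m : ℕ} (k : Fin r) {G H : (Fin r → ℕ) → ℕ} {p q s : List Op}
    (hp : Computes r p fun v => G fun i => v i)
    (hq : Computes (r + p.length) q fun v => H fun i => v i)
    (hs : Computes (r + p.length + q.length) s fun _ => m)
    (hn : r + p.length + q.length + s.length < n) :
    ∃ S : List (Eqn n), ∀ y : Fin r → ℕ, (G y = H y ∧ y k = m) ↔
      ∃ x : Fin n → ℕ, (∀ e ∈ S, e.Holds x) ∧ ∀ i : Fin r, x (i : ℕ) = y i := by
  set c₁ := r + p.length
  set c₂ := c₁ + q.length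
  set c₃ := c₂ + s.length
  have hwf : WellFormed r (p ++ q ++ s ++ [.one]) := by
    simp only [wellFormed_append, List.length_append, ← Nat.add_assoc]
    exact ⟨⟨⟨hp.1, hq.1⟩, hs.1⟩, trivial, trivial⟩
  have hval : ∀ v, Runs v r (p ++ q ++ s ++ [.one]) →
      v (c₁ - 1) = (G fun i => v i) ∧ v (c₂ - 1) = (H fun i => v i) ∧ v (c₃ - 1) = m ∧
        v c₃ = 1 := by
    intro v hv
    simp only [runs_append, List.length_append, ← Nat.add_assoc] at hv
    obtain ⟨⟨⟨hvp, hvq⟩, hvs⟩, hvone, -⟩ := hv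
    exact ⟨hp.2.2 v hvp, hq.2.2 v hvq, hs.2.2 v hvs, hvone⟩
  -- An operation aimed at an already written register is an assertion: with `1` in register
  -- `c₃`, these two say `G = H` and `x_k = m`.
  refine ⟨toEqns r (p ++ q ++ s ++ [.one]) ++
    [(Op.mul (c₁ - 1) c₃).toEqn (c₂ - 1), (Op.mul k c₃).toEqn (c₃ - 1)], fun y => ?_⟩
  simp only [List.forall_mem_append, List.forall_mem_cons, List.not_mem_nil, IsEmpty.forall_iff,
    implies_true, and_true, forall_holds_toEqns_iff, Op.holds_toEqn_iff, Op.eval]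
  constructor
  · rintro ⟨hGH, hk⟩
    obtain ⟨x, hrun, hxy⟩ := hwf.exists_fin_runs (n := n) (by simp; omega) y
    obtain ⟨hG, hH, hm, hone⟩ := hval _ hrun
    have hy : (fun i : Fin r => x i) = y := funext hxy
    rw [hy] at hG hH
    refine ⟨x, ⟨hrun, ?_, ?_⟩, hxy⟩
    · rw [hG, hH, hone, mul_one, hGH]
    · rw [hm, hone, mul_one, hxy, hk]
  · rintro ⟨x, ⟨hrun, hGH, hk⟩, hxy⟩
    obtain ⟨hG, hH, hm, hone⟩ := hval _ hrun
    have hy : (fun i : Fin r => x i) = y := funext hxy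
    rw [hy] at hG hH
    rw [hone, mul_one, hG, hH] at hGH
    rw [hone, mul_one, hm, hxy] at hk
    exact ⟨hGH.symm, hk.symm⟩

end Equations

end SLP

open SLP MvPolynomial in
theorem stmt_15 (f : ℕ → ℕ) (r : ℕ) (hr : 2 ≤ r) (W : MvPolynomial (Fin r) ℤ)
    (hW : ∀ x1 x2 : ℕ, x1 = f x2 ↔
      ∃ x : Fin r → ℕ, x ⟨0, by omega⟩ = x1 ∧ x ⟨1, by omega⟩ = x2 ∧
        MvPolynomial.aeval (fun i => (x i : ℤ)) W = 0) :
    ∃ (w : ℕ) (hw : 0 < w), ∀ (n : ℕ) (hn : w ≤ n),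
      ∃ S : List (Eqn n),
        (∃ x : Fin n → ℕ, ∀ e ∈ S, e.Holds x) ∧
        ∀ x : Fin n → ℕ, (∀ e ∈ S, e.Holds x) → x ⟨0, by omega⟩ = f n := by
  obtain ⟨P, Q, rfl⟩ := W.exists_eq_map_sub_map
  have hzero : ∀ y : Fin r → ℕ, aeval (fun i => (y i : ℤ))
      (P.map (Nat.castRingHom ℤ) - Q.map (Nat.castRingHom ℤ)) = 0 ↔ eval y P = eval y Q := by
    intro y
    rw [map_sub, aeval_map_natCast, aeval_map_natCast, sub_eq_zero, Nat.cast_inj]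
  obtain ⟨p, hp⟩ := exists_computes_eval P (le_refl r)
  obtain ⟨q, hq⟩ := exists_computes_eval Q (Nat.le_add_right r p.length)
  refine ⟨4 * (r + p.length + q.length) + 44, by omega, fun n hn => ?_⟩
  have : NeZero n := ⟨by omega⟩
  obtain ⟨s, hs, hslen⟩ := exists_computes_const (r + p.length + q.length) n
  obtain ⟨S, hS⟩ := exists_eqns_iff_of_computes (n := n) (G := fun y => eval y P) (H := fun y => eval y Q)
    ⟨1, hr⟩ hp hq hs (by omega)
  obtain ⟨y, -, hy1, hyW⟩ := (hW (f n) n).mp rfl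
  obtain ⟨x, hx, -⟩ := (hS y).mp ⟨(hzero y).mp hyW, hy1⟩
  refine ⟨S, ⟨x, hx⟩, fun x hx => ?_⟩
  obtain ⟨hPQ, hx1⟩ := (hS _).mpr ⟨x, hx, fun _ => rfl⟩
  exact (hW _ n).mpr ⟨_, rfl, hx1, (hzero _).mpr hPQ⟩
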